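/- arXiv:0805.1401 — 3 statements merged into one kernel-verified Lean document; each statement's English description precedes it below -/
import Mathlib

section
/- Let (X, dist) be a metric space, let n ≥ 1 be an integer, let ε ∈ (0, 1], let h > 0, and let k be an integer with 1 ≤ k < 2n. Let p₀, …, p_{k+1} and p'₀, …, p'_{k+1} be points of X with p'₀ = p₀ and p'_{k+1} = p_{k+1}, such that dist(p_i, p'_i) ≤ εh/(4n) for every i ∈ {1, …, k}, and dist(p₀, p₁) ≥ h. Then Σ_{i=0}^{k} dist(p'_i, p'_{i+1}) < (1 + ε) · Σ_{i=0}^{k} dist(p_i, p_{i+1}). -/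
open Finset

/-! Each interior point moves by at most `δ = εh/(4n)` and the endpoints are fixed, so by the
triangle inequality the perturbed path is longer by at most `2kδ < εh`. Since the first segment
has length at least `h`, this excess is less than `ε` times the length of the original path. -/

section PathPerturbation

variable {X : Type*} [PseudoMetricSpace X]

theorem dist_succ_perturb_le (p p' : ℕ → X) (i : ℕ) :
    dist (p' i) (p' (i + 1)) ≤
      dist (p i) (p (i + 1)) + (dist (p i) (p' i) + dist (p (i + 1)) (p' (i + 1))) := by
  have := dist_triangle4 (p' i) (p i) (p (i + 1)) (p' (i + 1))
  rw [dist_comm (p' i) (p i)] at this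
  linarith

/-- The error terms `dist (p i) (p' i)` vanish at both fixed endpoints, so each interior one is
counted exactly twice. -/
theorem sum_range_dist_perturb_le {p p' : ℕ → X} {k : ℕ} {δ : ℝ} (h0 : p' 0 = p 0)
    (hlast : p' (k + 1) = p (k + 1)) (hδ : ∀ i ∈ Icc 1 k, dist (p i) (p' i) ≤ δ) :
    ∑ i ∈ range (k + 1), dist (p' i) (p' (i + 1)) ≤
      ∑ i ∈ range (k + 1), dist (p i) (p (i + 1)) + 2 * k * δ := by
  have interior : ∑ i ∈ range k, dist (p (i + 1)) (p' (i + 1)) ≤ k * δ := by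
    simpa using sum_le_card_nsmul (range k) (fun i ↦ dist (p (i + 1)) (p' (i + 1))) δ
      fun i hi ↦ hδ (i + 1) (by simp at hi ⊢; omega)
  have errors : ∑ i ∈ range (k + 1), (dist (p i) (p' i) + dist (p (i + 1)) (p' (i + 1))) ≤
      2 * k * δ := by
    rw [sum_add_distrib, sum_range_succ', sum_range_succ _ k, h0, hlast, dist_self, dist_self]
    linarith
  calc ∑ i ∈ range (k + 1), dist (p' i) (p' (i + 1))
      ≤ ∑ i ∈ range (k + 1),
          (dist (p i) (p (i + 1)) + (dist (p i) (p' i) + dist (p (i + 1)) (p' (i + 1)))) :=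
        sum_le_sum fun i _ ↦ dist_succ_perturb_le p p' i
    _ ≤ _ := by rw [sum_add_distrib]; linarith

theorem dist_zero_one_le_sum_range_dist (p : ℕ → X) (k : ℕ) :
    dist (p 0) (p 1) ≤ ∑ i ∈ range (k + 1), dist (p i) (p (i + 1)) :=
  single_le_sum (f := fun i ↦ dist (p i) (p (i + 1))) (fun _ _ ↦ dist_nonneg)
    (mem_range.2 k.succ_pos)

end PathPerturbation

theorem uniform_steiner_approx_general {X : Type*} [MetricSpace X] (n : ℕ)
    (ε h : ℝ) (hε0 : 0 < ε) (hh : 0 < h)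
    (k : ℕ) (hk2 : k < 2 * n)
    (p p' : ℕ → X) (h0 : p' 0 = p 0) (hklast : p' (k + 1) = p (k + 1))
    (hpert : ∀ i ∈ Icc 1 k, dist (p i) (p' i) ≤ ε * h / (4 * n))
    (hfirst : h ≤ dist (p 0) (p 1)) :
    ∑ i ∈ range (k + 1), dist (p' i) (p' (i + 1)) <
      (1 + ε) * ∑ i ∈ range (k + 1), dist (p i) (p (i + 1)) := by
  set S := ∑ i ∈ range (k + 1), dist (p i) (p (i + 1))
  have hn : (0 : ℝ) < n := Nat.cast_pos.2 (by omega)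
  have excess_lt : 2 * k * (ε * h / (4 * n)) < ε * h := by
    have hk : (k : ℝ) < 2 * n := by exact_mod_cast hk2
    rw [show 2 * k * (ε * h / (4 * n)) = ε * h * (k / (2 * n)) by field_simp; ring]
    exact mul_lt_of_lt_one_right (by positivity) ((div_lt_one (by positivity)).2 hk)
  have hS : h ≤ S := hfirst.trans (dist_zero_one_le_sum_range_dist p k)
  calc ∑ i ∈ range (k + 1), dist (p' i) (p' (i + 1))
      ≤ S + 2 * k * (ε * h / (4 * n)) := sum_range_dist_perturb_le h0 hklast hpert
    _ < S + ε * S := by gcongr S + ?_; exact excess_lt.trans_le (by gcongr)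
    _ = (1 + ε) * S := by ring

/-- Approximation factor lemma for uniformly spaced Steiner points, abstract form. -/
theorem uniform_steiner_approx {X : Type*} [MetricSpace X] (n : ℕ) (hn : 1 ≤ n)
    (ε h : ℝ) (hε0 : 0 < ε) (hε1 : ε ≤ 1) (hh : 0 < h)
    (k : ℕ) (hk1 : 1 ≤ k) (hk2 : k < 2 * n)
    (p p' : ℕ → X) (h0 : p' 0 = p 0) (hklast : p' (k + 1) = p (k + 1))
    (hpert : ∀ i ∈ Icc 1 k, dist (p i) (p' i) ≤ ε * h / (4 * n))
    (hfirst : h ≤ dist (p 0) (p 1)) :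
    ∑ i ∈ range (k + 1), dist (p' i) (p' (i + 1)) <
      (1 + ε) * ∑ i ∈ range (k + 1), dist (p i) (p (i + 1)) :=
  uniform_steiner_approx_general n ε h hε0 hh k hk2 p p' h0 hklast hpert hfirst
end

section
/- Let (X, dist) be a metric space, let n ≥ 1 be an integer, let ε ∈ (0, 1], let h > 0, and let k be an integer with 1 ≤ k < 2n. Let p₀, …, p_{k+1} and p'₀, …, p'_{k+1} be points of X with p'₀ = p₀ and p'_{k+1} = p_{k+1}, such that dist(p_i, p'_i) ≤ (ε/6) · dist(p_{i−1}, p_i) + εh/(6n) for every i ∈ {1, …, k}, and Σ_{i=0}^{k} dist(p_i, p_{i+1}) ≥ h. Then Σ_{i=0}^{k} dist(p'_i, p'_{i+1}) < (1 + ε) · Σ_{i=0}^{k} dist(p_i, p_{i+1}). -/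
/-!
Each leg `p'ᵢ p'ᵢ₊₁` is at most `dist(pᵢ, pᵢ₊₁)` plus the offsets at its two ends, and the
offsets at the fixed endpoints vanish, so the perturbed path exceeds the original length `L` by at
most twice the total offset. The proportional parts of the offsets add up to at most `(ε/6)·L`,
and the `k < 2n` absolute parts to less than `εh/3 ≤ εL/3`; hence the excess is below `ε·L`.
-/

open Finset

section

variable {X : Type*} [PseudoMetricSpace X]

theorem sum_dist_le_sum_dist_add_offsets (p p' : ℕ → X) (m : ℕ) :
    ∑ i ∈ range m, dist (p' i) (p' (i + 1)) ≤
      ∑ i ∈ range m, dist (p i) (p (i + 1)) +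
        ∑ i ∈ range m, (dist (p i) (p' i) + dist (p (i + 1)) (p' (i + 1))) := by
  rw [← sum_add_distrib]
  gcongr with i
  linarith [dist_triangle4 (p' i) (p i) (p (i + 1)) (p' (i + 1)), dist_comm (p' i) (p i)]

theorem sum_dist_le_of_endpoints_eq (p p' : ℕ → X) (k : ℕ) (h0 : p' 0 = p 0)
    (hk : p' (k + 1) = p (k + 1)) :
    ∑ i ∈ range (k + 1), dist (p' i) (p' (i + 1)) ≤
      ∑ i ∈ range (k + 1), dist (p i) (p (i + 1)) +
        2 * ∑ i ∈ range k, dist (p (i + 1)) (p' (i + 1)) := by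
  refine (sum_dist_le_sum_dist_add_offsets p p' (k + 1)).trans_eq ?_
  rw [sum_add_distrib, sum_range_succ' (fun i ↦ dist (p i) (p' i)),
    sum_range_succ (fun i ↦ dist (p (i + 1)) (p' (i + 1))), h0, hk]
  simp only [dist_self, add_zero]
  ring

theorem sum_offsets_le (p p' : ℕ → X) {a b : ℝ} (ha : 0 ≤ a) (k : ℕ)
    (hoff : ∀ i < k, dist (p (i + 1)) (p' (i + 1)) ≤ a * dist (p i) (p (i + 1)) + b) :
    ∑ i ∈ range k, dist (p (i + 1)) (p' (i + 1)) ≤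
      a * ∑ i ∈ range (k + 1), dist (p i) (p (i + 1)) + k * b := by
  calc ∑ i ∈ range k, dist (p (i + 1)) (p' (i + 1))
      ≤ ∑ i ∈ range k, (a * dist (p i) (p (i + 1)) + b) :=
        sum_le_sum fun i hi ↦ hoff i (mem_range.1 hi)
    _ = a * ∑ i ∈ range k, dist (p i) (p (i + 1)) + k * b := by
        rw [sum_add_distrib, ← mul_sum, sum_const, card_range, nsmul_eq_mul]
    _ ≤ a * ∑ i ∈ range (k + 1), dist (p i) (p (i + 1)) + k * b := by
        gcongr
        omega

end

theorem geometric_steiner_approx_general {X : Type*} [MetricSpace X] (n : ℕ)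
    (ε h : ℝ) (hε0 : 0 < ε) (hh : 0 < h)
    (k : ℕ) (hk2 : k < 2 * n)
    (p p' : ℕ → X) (h0 : p' 0 = p 0) (hklast : p' (k + 1) = p (k + 1))
    (hpert : ∀ i ∈ Icc 1 k,
      dist (p i) (p' i) ≤ (ε / 6) * dist (p (i - 1)) (p i) + ε * h / (6 * n))
    (hlen : h ≤ ∑ i ∈ range (k + 1), dist (p i) (p (i + 1))) :
    ∑ i ∈ range (k + 1), dist (p' i) (p' (i + 1)) <
      (1 + ε) * ∑ i ∈ range (k + 1), dist (p i) (p (i + 1)) := by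
  set L := ∑ i ∈ range (k + 1), dist (p i) (p (i + 1))
  have hoff : ∀ i < k, dist (p (i + 1)) (p' (i + 1)) ≤
      ε / 6 * dist (p i) (p (i + 1)) + ε * h / (6 * n) := fun i hi ↦ by
    simpa using hpert (i + 1) (mem_Icc.2 ⟨by omega, hi⟩)
  have hn_pos : (0 : ℝ) < n := by exact_mod_cast (show 0 < n by omega)
  have hkn : (k : ℝ) / n < 2 := by
    rw [div_lt_iff₀ hn_pos]
    exact_mod_cast hk2
  have hbudget : (k : ℝ) * (ε * h / (6 * n)) < ε * L / 3 :=
    calc (k : ℝ) * (ε * h / (6 * n)) = ε / 6 * h * (k / n) := by field_simp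
      _ < ε / 6 * h * 2 := by gcongr
      _ ≤ ε / 6 * L * 2 := by gcongr
      _ = ε * L / 3 := by ring
  calc ∑ i ∈ range (k + 1), dist (p' i) (p' (i + 1))
      ≤ L + 2 * ∑ i ∈ range k, dist (p (i + 1)) (p' (i + 1)) :=
        sum_dist_le_of_endpoints_eq p p' k h0 hklast
    _ < (1 + ε) * L := by linarith [sum_offsets_le p p' (by positivity) k hoff]

/-- Approximation factor lemma for Steiner points in geometric progression, abstract form. -/
theorem geometric_steiner_approx {X : Type*} [MetricSpace X] (n : ℕ) (hn : 1 ≤ n)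
    (ε h : ℝ) (hε0 : 0 < ε) (hε1 : ε ≤ 1) (hh : 0 < h)
    (k : ℕ) (hk1 : 1 ≤ k) (hk2 : k < 2 * n)
    (p p' : ℕ → X) (h0 : p' 0 = p 0) (hklast : p' (k + 1) = p (k + 1))
    (hpert : ∀ i ∈ Icc 1 k,
      dist (p i) (p' i) ≤ (ε / 6) * dist (p (i - 1)) (p i) + ε * h / (6 * n))
    (hlen : h ≤ ∑ i ∈ range (k + 1), dist (p i) (p (i + 1))) :
    ∑ i ∈ range (k + 1), dist (p' i) (p' (i + 1)) <
      (1 + ε) * ∑ i ∈ range (k + 1), dist (p i) (p (i + 1)) :=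
  geometric_steiner_approx_general n ε h hε0 hh k hk2 p p' h0 hklast hpert hlen
end

section
/- In ℝ³, let ℓ be an affine subspace containing the point v, let w be a point with dist(v, w) ≤ L and infDist(w, ℓ) ≥ h, where 0 < h ≤ L, and let ε > 0. Let t ∈ [0, 1], set p = v + t·(w − v), and let p' be a point with dist(p, p') ≤ (εh/(6L)) · dist(v, p). Then for every point u ∈ ℓ one has dist(p, p') ≤ (ε/6) · dist(u, p). -/
/-!
The homothety of ratio `t` centred at `v ∈ ℓ` maps `ℓ` onto itself (for `t ≠ 0`) and `w` to `p`,
so every point of `ℓ` is at distance at least `t h` from `p`, while `dist v p = t · dist v w ≤ t L`.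
Hence `dist p p' ≤ (ε h / (6 L)) · t L = (ε / 6) · t h ≤ (ε / 6) · dist u p` for `u ∈ ℓ`.
-/

open AffineMap Metric

theorem dist_lineMap_lineMap_same_left {𝕜 V P : Type*} [NormedField 𝕜] [NormedAddCommGroup V]
    [NormedSpace 𝕜 V] [MetricSpace P] [NormedAddTorsor V P] (v q w : P) (c : 𝕜) :
    dist (lineMap v q c) (lineMap v w c) = ‖c‖ * dist q w := by
  rw [dist_eq_norm_vsub V, lineMap_vsub_lineMap, vsub_self, lineMap_apply_module', sub_zero,
    add_zero, norm_smul, dist_eq_norm_vsub V]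

theorem mul_infDist_le_dist_lineMap {V P : Type*} [NormedAddCommGroup V] [NormedSpace ℝ V]
    [MetricSpace P] [NormedAddTorsor V P] {s : AffineSubspace ℝ P} {u v : P} (hu : u ∈ s)
    (hv : v ∈ s) (w : P) {t : ℝ} (ht : 0 ≤ t) :
    t * infDist w s ≤ dist u (lineMap v w t) := by
  rcases ht.eq_or_lt with rfl | ht
  · simp
  set q := lineMap v u t⁻¹
  have hq : q ∈ s := lineMap_mem _ hv hu
  have hu_eq : lineMap v q t = u := by simp [q, ht.ne']
  calc t * infDist w s ≤ t * dist q w := by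
        rw [dist_comm]; exact mul_le_mul_of_nonneg_left (infDist_le_dist_of_mem hq) ht.le
    _ = dist u (lineMap v w t) := by
        rw [← hu_eq, dist_lineMap_lineMap_same_left, Real.norm_of_nonneg ht.le]

theorem far_offset_general (ℓ : AffineSubspace ℝ (EuclideanSpace ℝ (Fin 3)))
    (v : EuclideanSpace ℝ (Fin 3)) (hv : v ∈ ℓ)
    (w : EuclideanSpace ℝ (Fin 3)) (L h ε : ℝ)
    (hL : dist v w ≤ L) (hwℓ : h ≤ Metric.infDist w (ℓ : Set (EuclideanSpace ℝ (Fin 3))))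
    (hh0 : 0 < h) (hhL : h ≤ L) (hε : 0 < ε)
    (t : ℝ) (ht0 : 0 ≤ t)
    (p p' : EuclideanSpace ℝ (Fin 3)) (hp : p = v + t • (w - v))
    (hp' : dist p p' ≤ (ε * h / (6 * L)) * dist v p) :
    ∀ u ∈ ℓ, dist p p' ≤ (ε / 6) * dist u p := by
  intro u hu
  have hL0 : 0 < L := hh0.trans_le hhL
  replace hp : p = lineMap v w t := by rw [hp, lineMap_apply_module', add_comm]
  have hvp : dist v p = t * dist v w := by
    rw [hp, dist_left_lineMap, Real.norm_of_nonneg ht0]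
  calc dist p p' ≤ (ε * h / (6 * L)) * (t * L) := by
        rw [hvp] at hp'
        exact hp'.trans (by gcongr)
    _ = ε / 6 * (t * h) := by field_simp
    _ ≤ ε / 6 * dist u p := by
        rw [hp]
        gcongr
        exact (mul_le_mul_of_nonneg_left hwℓ ht0).trans (mul_infDist_le_dist_lineMap hu hv w ht0)

/-- The far-offset lemma in abstract form. -/
theorem far_offset (ℓ : AffineSubspace ℝ (EuclideanSpace ℝ (Fin 3)))
    (v : EuclideanSpace ℝ (Fin 3)) (hv : v ∈ ℓ)
    (w : EuclideanSpace ℝ (Fin 3)) (L h ε : ℝ)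
    (hL : dist v w ≤ L) (hwℓ : h ≤ Metric.infDist w (ℓ : Set (EuclideanSpace ℝ (Fin 3))))
    (hh0 : 0 < h) (hhL : h ≤ L) (hε : 0 < ε)
    (t : ℝ) (ht0 : 0 ≤ t) (ht1 : t ≤ 1)
    (p p' : EuclideanSpace ℝ (Fin 3)) (hp : p = v + t • (w - v))
    (hp' : dist p p' ≤ (ε * h / (6 * L)) * dist v p) :
    ∀ u ∈ ℓ, dist p p' ≤ (ε / 6) * dist u p :=
  far_offset_general ℓ v hv w L h ε hL hwℓ hh0 hhL hε t ht0 p p' hp hp'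
end
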